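/- Let m, M, α be constants with 0 < m ≤ M, 1/2 < α ≤ 1, and let c = τμm > 0 with c ≠ 2α - 1. Suppose m/t ≤ η(t) ≤ M/t^α for 1 ≤ t ≤ T. Then Σ_{t=1}^{T} η(t)² exp(-τμ Σ_{u=t+1}^{T} η(u)) ≤ M² exp(c) [ 1/(T+1)^c + ((T+1)^{c - 2α + 1} - 1)/((c - 2α + 1)(T+1)^c) ]. -/

import Mathlib

/-!
The lower band `η u ≥ m / u` and the harmonic bounds `log (T + 1) ≤ H_T`, `H_t ≤ 1 + log t`
give `∑_{u=t+1}^T η u ≥ m (log (T + 1) - log t - 1)`, so the discount factor of the `t`-th term is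
at most `e^c (t / (T + 1))^c` with `c = τ μ m`. Together with the upper band `η t ≤ M / t^α` each
term is at most `M² e^c (T + 1)^(-c) t^(c - 2α)`, and the sum of `t^(c - 2α)` is compared with
`1 + ∫_1^(T+1) x^(c - 2α) dx`, which is finite in closed form because `c - 2α ≠ -1`.
-/

open Finset

theorem harmonic_add_sum_Icc_inv {t T : ℕ} (htT : t ≤ T) :
    (harmonic t : ℝ) + ∑ u ∈ Icc (t + 1) T, (u : ℝ)⁻¹ = harmonic T := by
  have h := sum_Ioc_consecutive (fun u : ℕ => (u : ℝ)⁻¹) (Nat.zero_le t) htT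
  rw [← Icc_add_one_left_eq_Ioc, ← Icc_add_one_left_eq_Ioc, ← Icc_add_one_left_eq_Ioc] at h
  simpa [harmonic_eq_sum_Icc] using h

theorem log_sub_log_sub_one_le_sum_Icc_inv {t T : ℕ} (htT : t ≤ T) :
    Real.log (T + 1) - Real.log t - 1 ≤ ∑ u ∈ Icc (t + 1) T, (u : ℝ)⁻¹ := by
  have hT := log_add_one_le_harmonic T
  have ht := harmonic_le_one_add_log t
  rw [← harmonic_add_sum_Icc_inv htT] at hT
  push_cast at hT
  linarith

theorem sum_Icc_rpow_le_one_add_integral (r : ℝ) (T : ℕ) :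
    ∑ t ∈ Icc 1 T, (t : ℝ) ^ r ≤ 1 + ∫ x in (1 : ℝ)..1 + T, x ^ r := by
  have hshift : ∑ t ∈ Icc 1 T, (t : ℝ) ^ r = ∑ i ∈ range T, (1 + i : ℝ) ^ r := by
    rw [← Ico_add_one_right_eq_Icc, sum_Ico_eq_sum_range]
    simp
  rw [hshift]
  rcases le_total 0 r with hr | hr
  · have hmono : MonotoneOn (fun x : ℝ => x ^ r) (Set.Icc 1 (1 + T)) :=
      (Real.monotoneOn_rpow_Ici_of_exponent_nonneg hr).mono fun x hx => zero_le_one.trans hx.1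
    linarith [hmono.sum_le_integral]
  · -- each term but the first `1 ^ r = 1` is bounded by the integral over the preceding unit interval
    have hanti : AntitoneOn (fun x : ℝ => x ^ r) (Set.Icc 1 (1 + T)) :=
      (Real.antitoneOn_rpow_Ioi_of_exponent_nonpos hr).mono fun x hx => zero_lt_one.trans_le hx.1
    calc ∑ i ∈ range T, (1 + i : ℝ) ^ r
        ≤ ∑ i ∈ range (T + 1), (1 + i : ℝ) ^ r := by
          rw [sum_range_succ]; linarith [Real.rpow_nonneg (by positivity : (0 : ℝ) ≤ 1 + T) r]
      _ = ∑ i ∈ range T, (1 + ↑(i + 1) : ℝ) ^ r + 1 := by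
          rw [sum_range_succ']; simp
      _ ≤ 1 + ∫ x in (1 : ℝ)..1 + T, x ^ r := by linarith [hanti.sum_le_integral]

theorem integral_rpow_one_add_natCast {r : ℝ} (hr : r ≠ -1) (T : ℕ) :
    ∫ x in (1 : ℝ)..1 + T, x ^ r = ((T + 1) ^ (r + 1) - 1) / (r + 1) := by
  have h0 : (0 : ℝ) ∉ Set.uIcc (1 : ℝ) (1 + T) := by
    rw [Set.uIcc_of_le (by simp)]
    exact fun h => absurd h.1 (by norm_num)
  rw [integral_rpow (Or.inr ⟨hr, h0⟩), Real.one_rpow, add_comm (1 : ℝ)]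

theorem sum_Icc_rpow_le {r : ℝ} (hr : r ≠ -1) (T : ℕ) :
    ∑ t ∈ Icc 1 T, (t : ℝ) ^ r ≤ 1 + ((T + 1) ^ (r + 1) - 1) / (r + 1) :=
  integral_rpow_one_add_natCast hr T ▸ sum_Icc_rpow_le_one_add_integral r T

theorem exp_neg_mul_sum_Icc_le {η : ℕ → ℝ} {m κ : ℝ} {t T : ℕ} (hκ : 0 ≤ κ) (hm : 0 ≤ m)
    (ht : 1 ≤ t) (htT : t ≤ T) (hη : ∀ u ∈ Icc (t + 1) T, m / u ≤ η u) :
    Real.exp (-κ * ∑ u ∈ Icc (t + 1) T, η u) ≤ Real.exp (κ * m) * (t / (T + 1)) ^ (κ * m) := by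
  have hsum : m * (Real.log (T + 1) - Real.log t - 1) ≤ ∑ u ∈ Icc (t + 1) T, η u :=
    calc _ ≤ m * ∑ u ∈ Icc (t + 1) T, (u : ℝ)⁻¹ := by
          gcongr; exact log_sub_log_sub_one_le_sum_Icc_inv htT
      _ = ∑ u ∈ Icc (t + 1) T, m / u := by simp only [mul_sum, div_eq_mul_inv]
      _ ≤ _ := sum_le_sum hη
  have htpos : (0 : ℝ) < t := by exact_mod_cast ht
  rw [Real.rpow_def_of_pos (by positivity), Real.log_div htpos.ne' (by positivity), ← Real.exp_add]
  gcongr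
  nlinarith

theorem sq_mul_exp_neg_mul_sum_Icc_le {η : ℕ → ℝ} {m M α κ : ℝ} {t T : ℕ} (hκ : 0 ≤ κ)
    (hm : 0 < m) (hband : ∀ u ∈ Icc 1 T, m / u ≤ η u ∧ η u ≤ M / (u : ℝ) ^ α)
    (ht : t ∈ Icc 1 T) :
    η t ^ 2 * Real.exp (-κ * ∑ u ∈ Icc (t + 1) T, η u) ≤
      M ^ 2 * Real.exp (κ * m) / (T + 1) ^ (κ * m) * (t : ℝ) ^ (κ * m - 2 * α) := by
  obtain ⟨ht1, htT⟩ := mem_Icc.1 ht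
  have htpos : (0 : ℝ) < t := by exact_mod_cast ht1
  have hηt := hband t ht
  have hexp := exp_neg_mul_sum_Icc_le (η := η) hκ hm.le ht1 htT
    fun u hu => (hband u (mem_Icc.2 ⟨by grind, (mem_Icc.1 hu).2⟩)).1
  calc η t ^ 2 * Real.exp (-κ * ∑ u ∈ Icc (t + 1) T, η u)
      ≤ (M / (t : ℝ) ^ α) ^ 2 * (Real.exp (κ * m) * (t / (T + 1)) ^ (κ * m)) := by
        gcongr
        · exact (div_pos hm htpos).le.trans hηt.1
        · exact hηt.2
    _ = _ := by
        rw [Real.div_rpow htpos.le (by positivity), Real.rpow_sub htpos, mul_comm 2 α,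
          Real.rpow_mul htpos.le α 2, Real.rpow_two]
        field_simp

theorem stmt_16_general (η : ℕ → ℝ) (m M α τ μ : ℝ) (T : ℕ)
    (hm : 0 < m) (hτ : 0 < τ) (hμ : 0 < μ)
    (hcne : τ * μ * m ≠ 2 * α - 1)
    (hband : ∀ t ∈ Icc 1 T, m / t ≤ η t ∧ η t ≤ M / (t : ℝ) ^ α) :
    ∑ t ∈ Icc 1 T, η t ^ 2 * Real.exp (-τ * μ * ∑ u ∈ Icc (t + 1) T, η u) ≤
      M ^ 2 * Real.exp (τ * μ * m) *
        (1 / ((T : ℝ) + 1) ^ (τ * μ * m) +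
          (((T : ℝ) + 1) ^ (τ * μ * m - 2 * α + 1) - 1) /
            ((τ * μ * m - 2 * α + 1) * ((T : ℝ) + 1) ^ (τ * μ * m))) := by
  set c := τ * μ * m
  have hr : c - 2 * α ≠ -1 := fun h => hcne (by linarith)
  calc ∑ t ∈ Icc 1 T, η t ^ 2 * Real.exp (-τ * μ * ∑ u ∈ Icc (t + 1) T, η u)
      ≤ ∑ t ∈ Icc 1 T, M ^ 2 * Real.exp c / (T + 1) ^ c * (t : ℝ) ^ (c - 2 * α) :=
        sum_le_sum fun t ht => by
          simpa only [neg_mul] using sq_mul_exp_neg_mul_sum_Icc_le (mul_pos hτ hμ).le hm hband ht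
    _ = M ^ 2 * Real.exp c / (T + 1) ^ c * ∑ t ∈ Icc 1 T, (t : ℝ) ^ (c - 2 * α) :=
        (mul_sum _ _ _).symm
    _ ≤ M ^ 2 * Real.exp c / (T + 1) ^ c *
          (1 + ((T + 1) ^ (c - 2 * α + 1) - 1) / (c - 2 * α + 1)) := by
        gcongr; exact sum_Icc_rpow_le hr T
    _ = _ := by
        have : c - 2 * α + 1 ≠ 0 := fun h => hr (by linarith)
        field_simp

theorem stmt_16 (η : ℕ → ℝ) (m M α τ μ : ℝ) (T : ℕ) (hT : 1 ≤ T)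
    (hm : 0 < m) (hmM : m ≤ M) (hα1 : 1 / 2 < α) (hα2 : α ≤ 1)
    (hτ : 0 < τ) (hμ : 0 < μ) (hcpos : 0 < τ * μ * m)
    (hcne : τ * μ * m ≠ 2 * α - 1)
    (hband : ∀ t ∈ Icc 1 T, m / t ≤ η t ∧ η t ≤ M / (t : ℝ) ^ α) :
    ∑ t ∈ Icc 1 T, η t ^ 2 * Real.exp (-τ * μ * ∑ u ∈ Icc (t + 1) T, η u) ≤
      M ^ 2 * Real.exp (τ * μ * m) *
        (1 / ((T : ℝ) + 1) ^ (τ * μ * m) +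
          (((T : ℝ) + 1) ^ (τ * μ * m - 2 * α + 1) - 1) /
            ((τ * μ * m - 2 * α + 1) * ((T : ℝ) + 1) ^ (τ * μ * m))) :=
  stmt_16_general η m M α τ μ T hm hτ hμ hcne hband
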